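/- (Wielandt minimax analogue for partial sums of eigenvalues.) Let A be an admissible pseudo-Hermitian n×n matrix with eigenvalues λ_p ≥ … ≥ λ_1 > μ_1 ≥ … ≥ μ_q, and fix integers 1 ≤ i_1 < i_2 < … < i_m ≤ p. Then Σ_{j=1}^m λ_{i_j} = min over flags V_{i_1} ⊂ V_{i_2} ⊂ … ⊂ V_{i_m} (with dim V_{i_j} = i_j and V_{i_m}∖{0} ⊆ ℂⁿ₊) of the max over systems x_1, …, x_m subordinate to the flag of Σ_{j=1}^m x_j†·A·x_j; precisely: (i) for every such flag there exists a subordinate system with Σ_{j=1}^m x_j†·A·x_j ≥ Σ_{j=1}^m λ_{i_j}, and (ii) there exists such a flag for which every subordinate system satisfies Σ_{j=1}^m x_j†·A·x_j ≤ Σ_{j=1}^m λ_{i_j}. -/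

import Mathlib

open Matrix

/-- The signature matrix `J = diag(1,…,1,−1,…,−1)` with `p` ones and `q` minus-ones. -/
noncomputable def Jmat (p q : ℕ) : Matrix (Fin (p + q)) (Fin (p + q)) ℂ :=
  Matrix.diagonal (fun i => if (i : ℕ) < p then 1 else -1)

/-- The indefinite pairing `⟨z,w⟩ = Σ_{i<p} z_i conj(w_i) − Σ_{i≥p} z_i conj(w_i)`;
equivalently `w† · z` where `x† = (J conj(x))ᵀ`. -/
noncomputable def pairing (p q : ℕ) (z w : Fin (p + q) → ℂ) : ℂ :=
  ∑ i : Fin (p + q),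
    (if (i : ℕ) < p then z i * (starRingEnd ℂ) (w i) else -(z i * (starRingEnd ℂ) (w i)))

/-- The diagonal entries of `Λ = diag(λ_p, …, λ_1, μ_1, …, μ_q)`, where `lam` and `mu`
are 0-indexed: `lam i = λ_{i+1}` and `mu j = μ_{j+1}`. -/
noncomputable def diagEntries (p q : ℕ) (lam : Fin p → ℝ) (mu : Fin q → ℝ) :
    Fin (p + q) → ℂ :=
  fun i =>
    if h : (i : ℕ) < p then ((lam ⟨p - 1 - (i : ℕ), by omega⟩ : ℝ) : ℂ)
    else ((mu ⟨(i : ℕ) - p, by have := i.isLt; omega⟩ : ℝ) : ℂ)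

/-- `A` is an admissible pseudo-Hermitian matrix with (real) eigenvalues
`λ_p ≥ … ≥ λ_1 > μ_1 ≥ … ≥ μ_q`, recorded 0-indexed as `lam i = λ_{i+1}` (so `lam` is
monotone) and `mu j = μ_{j+1}` (so `mu` is antitone), with `λ_1 > μ_1`, and
`A = U Λ U⁻¹` for some invertible `U` with `U J Uᴴ = J`. -/
def IsAdmissible (p q : ℕ) (hp : 0 < p) (hq : 0 < q)
    (A : Matrix (Fin (p + q)) (Fin (p + q)) ℂ)
    (lam : Fin p → ℝ) (mu : Fin q → ℝ) : Prop :=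
  A * Jmat p q = Jmat p q * A.conjTranspose ∧
  Monotone lam ∧ Antitone mu ∧ mu ⟨0, hq⟩ < lam ⟨0, hp⟩ ∧
  ∃ U : Matrix (Fin (p + q)) (Fin (p + q)) ℂ,
    IsUnit U ∧ U * Jmat p q * U.conjTranspose = Jmat p q ∧
    A = U * Matrix.diagonal (diagEntries p q lam mu) * U⁻¹

/-- The Rayleigh ratio `R_A(x) = (x† A x)/(x† x)`, as a real number (for admissible
pseudo-Hermitian `A` both `x† A x` and `x† x` are real). -/
noncomputable def rayleigh (p q : ℕ) (A : Matrix (Fin (p + q)) (Fin (p + q)) ℂ)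
    (x : Fin (p + q) → ℂ) : ℝ :=
  (pairing p q (A.mulVec x) x).re / (pairing p q x x).re

/-- A flag `V_{i_1} ⊂ V_{i_2} ⊂ ⋯ ⊂ V_{i_m}` of complex subspaces of `ℂⁿ` with
`dim V_{i_j} = i_j` (here `idx : Fin m → Fin p` is 0-indexed, so `i_j = idx j + 1`)
and `V_{i_m} ∖ {0} ⊆ ℂⁿ₊`. -/
def IsFlag (p q m : ℕ) (hm : 0 < m) (idx : Fin m → Fin p)
    (V : Fin m → Submodule ℂ (Fin (p + q) → ℂ)) : Prop :=
  (∀ j k : Fin m, j < k → V j < V k) ∧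
  (∀ j, Module.finrank ℂ (V j) = (idx j : ℕ) + 1) ∧
  (∀ x ∈ V ⟨m - 1, by omega⟩, x ≠ 0 → 0 < (pairing p q x x).re)

/-- A system of vectors `x_1, …, x_m` subordinate to the flag `V`: `x_j ∈ V_{i_j}`
and `⟨x_j, x_k⟩ = δ_{jk}`. -/
def IsSubordinate (p q m : ℕ) (V : Fin m → Submodule ℂ (Fin (p + q) → ℂ))
    (x : Fin m → Fin (p + q) → ℂ) : Prop :=
  (∀ j, x j ∈ V j) ∧ ∀ j k, pairing p q (x j) (x k) = if j = k then 1 else 0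
/-!
Conjugation by `U` preserves the pairing, so everything reduces to the diagonal model
`Λ = diag(λ_p, …, λ_1, μ_1, …, μ_q)`, where `x† Λ x` is a combination of the eigenvalues with
weights `|x_i|²`, counted negatively on the last `q` coordinates.

For (ii) take the flag spanned by the eigenvectors of `λ_1, …, λ_{i_j}`: there the Rayleigh
quotient is at most `λ_{i_j}`.

For (i) let `W_j` be spanned by the eigenvectors of `λ_{i_j}, …, λ_p` and of all the `μ`'s; there
the Rayleigh quotient is at least `λ_{i_j}`, because every `μ` lies below `λ_1`. Dimension count
gives `dim V_{i_k} + dim W_j ≥ n + 1 + (k - j)` for `j ≤ k`, and an induction (quotienting by a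
vector of `V_{i_1} ∩ W_t` with `t` maximal) produces an `m`-dimensional `S` with
`dim (S ∩ V_{i_k}) ≥ k` and `dim (S ∩ W_k) ≥ m - k + 1`. As `S ⊆ V_{i_m}` is positive definite,
Gram–Schmidt gives orthonormal bases `x` of `S` with `x_k ∈ V_{i_k}` and `z` with `z_k ∈ W_k`.
Both `Σ x_k† A x_k` and `Σ z_k† A z_k` are the trace of the compression of `A` to `S`, and the
latter is termwise at least `λ_{i_k}`.
-/

open Module Submodule

theorem Fin.val_succAbove_add_ite {m : ℕ} (t : Fin (m + 1)) (j : Fin m) :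
    (t.succAbove j : ℕ) + (if t.succAbove j ≤ t then 1 else 0) = j + 1 := by
  rcases lt_or_ge j.castSucc t with h | h
  · rw [Fin.succAbove_of_castSucc_lt _ _ h, if_pos h.le, Fin.val_castSucc]
  · rw [Fin.succAbove_of_le_castSucc _ _ h, if_neg (not_le.mpr (h.trans_lt j.castSucc_lt_succ)),
      Fin.val_succ]

section FlagIntersection

variable {K E : Type*} [Field K] [AddCommGroup E] [Module K E]

open Classical in
theorem finrank_inf_span_singleton {y : E} (hy : y ≠ 0) (X : Submodule K E) :
    finrank K ↥(X ⊓ K ∙ y) = if y ∈ X then 1 else 0 := by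
  split_ifs with hyX
  · rw [inf_eq_right.mpr ((span_singleton_le_iff_mem y X).mpr hyX), finrank_span_singleton hy]
  · rw [((X.disjoint_span_singleton' hy).mpr hyX).eq_bot, finrank_bot]

theorem exists_ne_zero_mem_and_mem_iff_le {m : ℕ} (V₀ : Submodule K E)
    (W : Fin (m + 1) → Submodule K E) (hW : Antitone W) (h : V₀ ⊓ W 0 ≠ ⊥) :
    ∃ (t : Fin (m + 1)) (y : E), y ≠ 0 ∧ y ∈ V₀ ∧ ∀ j, y ∈ W j ↔ j ≤ t := by
  classical
  obtain ⟨t, ht, htmax⟩ := (Finset.univ.filter fun j => V₀ ⊓ W j ≠ ⊥).exists_max_image id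
    ⟨0, by simpa using h⟩
  obtain ⟨y, ⟨hyV, hyW⟩, hy0⟩ := exists_mem_ne_zero_of_ne_bot (Finset.mem_filter.mp ht).2
  refine ⟨t, y, hy0, hyV, fun j => ⟨fun hj => ?_, fun hj => hW hj hyW⟩⟩
  refine htmax j (Finset.mem_filter.mpr ⟨Finset.mem_univ _, fun hbot => hy0 ?_⟩)
  rw [← mem_bot K, ← hbot]
  exact ⟨hyV, hj⟩

variable [FiniteDimensional K E]

theorem finrank_map_mkQ_add_finrank_inf (L X : Submodule K E) :
    finrank K (X.map L.mkQ) + finrank K ↥(X ⊓ L) = finrank K X := by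
  have h := LinearMap.finrank_range_add_finrank_ker (L.mkQ.domRestrict X)
  rw [LinearMap.range_domRestrict, LinearMap.ker_domRestrict, ker_mkQ] at h
  rw [← h, ← LinearEquiv.finrank_eq (comapSubtypeEquivOfLe (inf_le_left : X ⊓ L ≤ X)),
    show comap X.subtype (X ⊓ L) = comap X.subtype L by ext; simp]

theorem finrank_inf_map_mkQ_add_finrank_inf (L X : Submodule K E) (S : Submodule K (E ⧸ L)) :
    finrank K ↥(S ⊓ X.map L.mkQ) + finrank K ↥(X ⊓ L) = finrank K ↥(S.comap L.mkQ ⊓ X) := by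
  have hL : X ⊓ S.comap L.mkQ ⊓ L = X ⊓ L := by
    rw [inf_assoc, inf_eq_right.mpr ((ker_mkQ L).symm.le.trans (LinearMap.ker_le_comap _))]
  rw [inf_comm (S.comap _) X, ← finrank_map_mkQ_add_finrank_inf L (X ⊓ S.comap L.mkQ), hL,
    ← map_inf_eq_map_inf_comap, inf_comm S]

open Classical in
theorem finrank_inf_map_mkQ_span_singleton {y : E} (hy : y ≠ 0) (X : Submodule K E)
    (S : Submodule K (E ⧸ K ∙ y)) :
    finrank K ↥(S ⊓ X.map (K ∙ y).mkQ) + (if y ∈ X then 1 else 0)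
      = finrank K ↥(S.comap (K ∙ y).mkQ ⊓ X) := by
  rw [← finrank_inf_span_singleton hy, finrank_inf_map_mkQ_add_finrank_inf]

open Classical in
theorem finrank_map_mkQ_span_singleton {y : E} (hy : y ≠ 0) (X : Submodule K E) :
    finrank K ↥(X.map (K ∙ y).mkQ) + (if y ∈ X then 1 else 0) = finrank K X := by
  have h := finrank_inf_map_mkQ_span_singleton hy X ⊤
  rwa [comap_top, top_inf_eq, top_inf_eq] at h

theorem le_finrank_map_mkQ_add_finrank_map_mkQ {m : ℕ} {V W : Fin (m + 1) → Submodule K E}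
    (hV : Monotone V)
    (hVW : ∀ j k, j ≤ k → finrank K E + 1 + k ≤ finrank K (V k) + finrank K (W j) + j)
    {t : Fin (m + 1)} {y : E} (hy0 : y ≠ 0) (hyV : y ∈ V 0) (hyW : ∀ j, y ∈ W j ↔ j ≤ t)
    (j k : Fin m) (hjk : j ≤ k) :
    finrank K (E ⧸ K ∙ y) + 1 + k ≤ finrank K ((V k.succ).map (K ∙ y).mkQ)
      + finrank K ((W (t.succAbove j)).map (K ∙ y).mkQ) + j := by
  have hE := (K ∙ y).finrank_quotient_add_finrank
  rw [finrank_span_singleton hy0] at hE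
  have hVk := finrank_map_mkQ_span_singleton hy0 (V k.succ)
  rw [if_pos (hV (Fin.zero_le _) hyV)] at hVk
  have hWj := finrank_map_mkQ_span_singleton hy0 (W (t.succAbove j))
  simp only [hyW] at hWj
  have hsa := t.val_succAbove_add_ite j
  have h := hVW (t.succAbove j) k.succ (by
    rw [Fin.le_def, Fin.val_succ]; have := Fin.le_def.mp hjk; omega)
  rw [Fin.val_succ] at h
  omega

theorem le_finrank_comap_mkQ_inf_of_monotone {m : ℕ}
    {V : Fin (m + 1) → Submodule K E} (hV : Monotone V) {y : E} (hy0 : y ≠ 0) (hyV : y ∈ V 0)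
    {S : Submodule K (E ⧸ K ∙ y)}
    (hS : ∀ k : Fin m, (k : ℕ) + 1 ≤ finrank K ↥(S ⊓ (V k.succ).map (K ∙ y).mkQ))
    (k : Fin (m + 1)) : (k : ℕ) + 1 ≤ finrank K ↥(S.comap (K ∙ y).mkQ ⊓ V k) := by
  have h := finrank_inf_map_mkQ_span_singleton hy0 (V k) S
  rw [if_pos (hV (Fin.zero_le k) hyV)] at h
  cases k using Fin.cases with
  | zero => simp only [Fin.val_zero]; omega
  | succ k => have := hS k; rw [Fin.val_succ]; omega

theorem le_finrank_comap_mkQ_inf_of_antitone {m : ℕ}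
    {W : Fin (m + 1) → Submodule K E} (hW : Antitone W) {t : Fin (m + 1)} {y : E} (hy0 : y ≠ 0)
    (hyW : ∀ j, y ∈ W j ↔ j ≤ t) {S : Submodule K (E ⧸ K ∙ y)}
    (hS : ∀ j : Fin m, m ≤ finrank K ↥(S ⊓ (W (t.succAbove j)).map (K ∙ y).mkQ) + j)
    (k : Fin (m + 1)) : m + 1 ≤ finrank K ↥(S.comap (K ∙ y).mkQ ⊓ W k) + k := by
  have h := finrank_inf_map_mkQ_span_singleton hy0 (W k) S
  simp only [hyW] at h
  by_cases hkt : k = t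
  · subst hkt
    rw [if_pos le_rfl] at h
    by_cases hkm : (k : ℕ) < m
    · obtain ⟨j, rfl⟩ : ∃ j : Fin m, j.castSucc = k := ⟨k.castLT hkm, Fin.castSucc_castLT k hkm⟩
      have hle := finrank_mono (inf_le_inf_left S
        (map_mono (f := (K ∙ y).mkQ) (hW j.castSucc_lt_succ.le)))
      have := hS j
      rw [Fin.succAbove_castSucc_self] at this
      rw [Fin.val_castSucc]
      omega
    · omega
  · obtain ⟨j, rfl⟩ := Fin.exists_succAbove_eq hkt
    have := hS j
    have := t.val_succAbove_add_ite j
    omega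

theorem exists_submodule_finrank_inf_ge {m : ℕ} (V W : Fin m → Submodule K E) (hV : Monotone V)
    (hW : Antitone W)
    (hVW : ∀ j k : Fin m, j ≤ k → finrank K E + 1 + k ≤ finrank K (V k) + finrank K (W j) + j) :
    ∃ S : Submodule K E, finrank K S = m ∧ (∀ k : Fin m, (k : ℕ) + 1 ≤ finrank K ↥(S ⊓ V k)) ∧
      ∀ k : Fin m, m ≤ finrank K ↥(S ⊓ W k) + k := by
  induction m generalizing E with
  | zero => exact ⟨⊥, finrank_bot K E, fun k => k.elim0, fun k => k.elim0⟩
  | succ m ih =>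
    have hVW₀ : V 0 ⊓ W 0 ≠ ⊥ := by
      intro hbot
      have := hVW 0 0 le_rfl
      have := finrank_sup_add_finrank_inf_eq (V 0) (W 0)
      have := (V 0 ⊔ W 0).finrank_le
      rw [hbot, finrank_bot] at *
      omega
    -- Quotienting by `y` uses up `V 0` and `W t`; the other `m` pairs still satisfy `hVW`.
    obtain ⟨t, y, hy0, hyV, hyW⟩ := exists_ne_zero_mem_and_mem_iff_le (V 0) W hW hVW₀
    obtain ⟨S, hS, hSV, hSW⟩ := ih (fun k => (V k.succ).map (K ∙ y).mkQ)
      (fun j => (W (t.succAbove j)).map (K ∙ y).mkQ)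
      (fun a b hab => map_mono (hV (Fin.succ_le_succ_iff.mpr hab)))
      (fun a b hab => map_mono (hW ((Fin.strictMono_succAbove t).monotone hab)))
      (le_finrank_map_mkQ_add_finrank_map_mkQ hV hVW hy0 hyV hyW)
    refine ⟨S.comap (K ∙ y).mkQ, ?_, le_finrank_comap_mkQ_inf_of_monotone hV hy0 hyV hSV,
      le_finrank_comap_mkQ_inf_of_antitone hW hy0 hyW hSW⟩
    have h := finrank_inf_map_mkQ_span_singleton hy0 ⊤ S
    rw [Submodule.map_top, range_mkQ, inf_top_eq, inf_top_eq, if_pos mem_top] at h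
    omega

end FlagIntersection

namespace LinearMap

variable {E : Type*} [AddCommGroup E] [Module ℂ E] {B : E →ₗ⋆[ℂ] E →ₗ[ℂ] ℂ}

def IsOrthonormal {ι : Type*} [DecidableEq ι] (B : E →ₗ⋆[ℂ] E →ₗ[ℂ] ℂ) (x : ι → E) : Prop :=
  ∀ j k, B (x j) (x k) = if j = k then 1 else 0

namespace IsOrthonormal

variable {ι κ : Type*} [DecidableEq ι] [DecidableEq κ] {x : ι → E}

theorem linearIndependent (hx : B.IsOrthonormal x) : LinearIndependent ℂ x :=
  linearIndependent_of_isOrthoᵢ (B := B) (isOrthoᵢ_def.mpr fun j k hjk => by rw [hx, if_neg hjk])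
    (fun j => by rw [hx, if_pos rfl]; exact one_ne_zero)

theorem comp (hx : B.IsOrthonormal x) {f : κ → ι} (hf : Function.Injective f) :
    B.IsOrthonormal (x ∘ f) := fun j k => by
  simp only [Function.comp_apply, hx (f j), hf.eq_iff]

theorem snoc {m : ℕ} (hB : B.IsSymm) {x : Fin m → E} (hx : B.IsOrthonormal x) {v : E}
    (hxv : ∀ j, B (x j) v = 0) (hv : B v v = 1) :
    B.IsOrthonormal (Fin.snoc x v : Fin (m + 1) → E) := by
  have hvx : ∀ j, B v (x j) = 0 := fun j => by rw [← hB.eq, hxv, map_zero]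
  intro j k
  induction j using Fin.lastCases <;> induction k using Fin.lastCases <;>
    simp [hv, hx _, hxv, hvx, Fin.castSucc_ne_last, (Fin.castSucc_ne_last _).symm]

end IsOrthonormal

theorem exists_ne_zero_mem_forall_apply_eq_zero [FiniteDimensional ℂ E] {m : ℕ} (x : Fin m → E)
    {C : Submodule ℂ E} (hC : m < finrank ℂ C) : ∃ v ∈ C, v ≠ 0 ∧ ∀ j, B (x j) v = 0 := by
  have hker := ker_ne_bot_of_finrank_lt (f := LinearMap.pi fun j => (B (x j)).comp C.subtype)
    (by simpa using hC)
  obtain ⟨v, hv, hv0⟩ := exists_mem_ne_zero_of_ne_bot hker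
  exact ⟨v, v.2, by simpa using hv0, fun j => by simpa using congrFun (mem_ker.mp hv) j⟩

theorem IsSymm.exists_smul_apply_smul_eq_one (hB : B.IsSymm) {v : E} (hv : 0 < (B v v).re) :
    ∃ c : ℂ, B (c • v) (c • v) = 1 := by
  have hreal : B v v = ((B v v).re : ℂ) := (Complex.conj_eq_iff_re.mp (hB.eq v v)).symm
  set r := (B v v).re
  refine ⟨((√r)⁻¹ : ℝ), ?_⟩
  rw [map_smulₛₗ₂, map_smul, hreal, Complex.conj_ofReal, smul_eq_mul, smul_eq_mul,
    ← Complex.ofReal_mul, ← Complex.ofReal_mul, ← mul_assoc, ← mul_inv,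
    Real.mul_self_sqrt hv.le, inv_mul_cancel₀ hv.ne', Complex.ofReal_one]

theorem IsSymm.exists_isOrthonormal_mem [FiniteDimensional ℂ E] (hB : B.IsSymm) {m : ℕ}
    (C : Fin m → Submodule ℂ E) (hC : Monotone C)
    (hdim : ∀ k : Fin m, (k : ℕ) + 1 ≤ finrank ℂ (C k))
    (hpos : ∀ k, ∀ v ∈ C k, v ≠ 0 → 0 < (B v v).re) :
    ∃ x : Fin m → E, (∀ k, x k ∈ C k) ∧ B.IsOrthonormal x := by
  induction m with
  | zero => exact ⟨Fin.elim0, fun k => k.elim0, fun k => k.elim0⟩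
  | succ m ih =>
    obtain ⟨x, hxC, hx⟩ := ih (C ∘ Fin.castSucc) (hC.comp Fin.strictMono_castSucc.monotone)
      (fun k => hdim k.castSucc) (fun k => hpos k.castSucc)
    obtain ⟨v, hvC, hv0, hxv⟩ := exists_ne_zero_mem_forall_apply_eq_zero (B := B) x
      (C := C (Fin.last m)) (by simpa using hdim (Fin.last m))
    obtain ⟨c, hc⟩ := hB.exists_smul_apply_smul_eq_one (hpos _ v hvC hv0)
    refine ⟨Fin.snoc x (c • v), fun k => ?_, hx.snoc hB (fun j => by simp [hxv]) hc⟩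
    induction k using Fin.lastCases with
    | last => simpa using (C _).smul_mem c hvC
    | cast k => simpa using hxC k

theorem apply_sum_smul_sum_smul {ι : Type*} [Fintype ι] (T : E →ₗ[ℂ] E) (x : ι → E)
    (M : Matrix ι ι ℂ) (j l : ι) :
    B (∑ k, M k j • x k) (T (∑ k, M k l • x k))
      = (Mᴴ * Matrix.of (fun k k' => B (x k) (T (x k'))) * M) j l := by
  simp only [map_sum, map_smulₛₗ₂, map_smul, LinearMap.sum_apply, smul_eq_mul,
    Matrix.mul_apply, Matrix.conjTranspose_apply, Matrix.of_apply, Finset.sum_mul,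
    Finset.mul_sum, RCLike.star_def]
  exact Finset.sum_congr rfl fun _ _ => Finset.sum_congr rfl fun _ _ => by ring

theorem IsOrthonormal.sum_apply_eq_of_mem_span {m : ℕ} (T : E →ₗ[ℂ] E) {x z : Fin m → E}
    (hx : B.IsOrthonormal x) (hz : B.IsOrthonormal z) (hzx : ∀ j, z j ∈ span ℂ (Set.range x)) :
    ∑ j, B (z j) (T (z j)) = ∑ j, B (x j) (T (x j)) := by
  choose c hc using fun j => (mem_span_range_iff_exists_fun ℂ).mp (hzx j)
  -- `z = x M` with `M` unitary, so both sums are `tr (Mᴴ G M) = tr G`, `G` the Gram matrix of `T`.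
  set M : Matrix (Fin m) (Fin m) ℂ := Matrix.of fun k j => c j k
  have hgram : ∀ (T : E →ₗ[ℂ] E) (j l),
      B (z j) (T (z l)) = (Mᴴ * Matrix.of (fun k k' => B (x k) (T (x k'))) * M) j l := by
    intro T j l
    rw [← hc j, ← hc l]
    exact apply_sum_smul_sum_smul T x M j l
  have hM : Mᴴ * M = 1 := by
    have hG : Matrix.of (fun k k' => B (x k) (x k')) = 1 := by
      ext k k'
      simp [hx k k', Matrix.one_apply]
    ext j l
    simpa [hz j l, hG, Matrix.one_apply] using (hgram LinearMap.id j l).symm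
  calc ∑ j, B (z j) (T (z j))
      = Matrix.trace (Mᴴ * Matrix.of (fun k k' => B (x k) (T (x k'))) * M) := by
        simp only [Matrix.trace, Matrix.diag, hgram]
    _ = Matrix.trace (M * Mᴴ * Matrix.of (fun k k' => B (x k) (T (x k')))) :=
        Matrix.trace_mul_cycle _ _ _
    _ = ∑ j, B (x j) (T (x j)) := by
        rw [mul_eq_one_comm.mp hM, Matrix.one_mul]
        rfl

theorem IsSymm.exists_isOrthonormal_sum_le [FiniteDimensional ℂ E] (hB : B.IsSymm)
    (T : E →ₗ[ℂ] E) {m : ℕ} (V W : Fin m → Submodule ℂ E) (hV : Monotone V) (hW : Antitone W)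
    (hVW : ∀ j k : Fin m, j ≤ k → finrank ℂ E + 1 + k ≤ finrank ℂ (V k) + finrank ℂ (W j) + j)
    (hpos : ∀ k, ∀ v ∈ V k, v ≠ 0 → 0 < (B v v).re)
    (c : Fin m → ℝ) (hc : ∀ j, ∀ w ∈ W j, B w w = 1 → c j ≤ (B w (T w)).re) :
    ∃ x : Fin m → E, (∀ j, x j ∈ V j) ∧ B.IsOrthonormal x ∧
      ∑ j, c j ≤ ∑ j, (B (x j) (T (x j))).re := by
  cases m with
  | zero => exact ⟨Fin.elim0, fun j => j.elim0, fun j => j.elim0, by simp⟩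
  | succ m =>
    obtain ⟨S, hS, hSV, hSW⟩ := exists_submodule_finrank_inf_ge V W hV hW hVW
    have hSle : S ≤ V (Fin.last m) := by
      have := hSV (Fin.last m)
      rw [Fin.val_last] at this
      exact inf_eq_left.mp (eq_of_le_of_finrank_le inf_le_left (by omega))
    obtain ⟨x, hxSV, hx⟩ := hB.exists_isOrthonormal_mem (fun k => S ⊓ V k)
      (fun _ _ hkl => inf_le_inf_left S (hV hkl)) hSV (fun k v hv => hpos k v hv.2)
    obtain ⟨z, hzSW, hz⟩ := hB.exists_isOrthonormal_mem (fun k => S ⊓ W k.rev)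
      (fun _ _ hkl => inf_le_inf_left S (hW (Fin.rev_le_rev.mpr hkl)))
      (fun k => by have := hSW k.rev; rw [Fin.val_rev] at this; omega)
      (fun _ v hv => hpos _ v (hSle hv.1))
    have hspan : span ℂ (Set.range x) = S := eq_of_le_of_finrank_le
      (span_le.mpr (Set.range_subset_iff.mpr fun k => (hxSV k).1))
      (by rw [finrank_span_eq_card hx.linearIndependent, hS, Fintype.card_fin])
    have htrace := hx.sum_apply_eq_of_mem_span T (hz.comp Fin.rev_injective)
      (fun j => hspan ▸ (hzSW j.rev).1)
    refine ⟨x, fun j => (hxSV j).2, hx, ?_⟩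
    calc ∑ j, c j ≤ ∑ j, (B (z j.rev) (T (z j.rev))).re := Finset.sum_le_sum fun j _ =>
          hc j _ (by simpa using (hzSW j.rev).2) (by rw [hz, if_pos rfl])
      _ = ∑ j, (B (x j) (T (x j))).re := by
          rw [← Complex.re_sum, ← Complex.re_sum, ← htrace]
          rfl

end LinearMap

theorem Matrix.mul_mul_eq_of_mul_mul_eq {n R : Type*} [Fintype n] [DecidableEq n] [CommRing R]
    {J U V : Matrix n n R} (hJ : J * J = 1) (h : U * J * V = J) : V * J * U = J := by
  have hU : U * (J * V * J) = 1 := by rw [← Matrix.mul_assoc, ← Matrix.mul_assoc, h, hJ]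
  calc V * J * U = J * J * V * J * U := by rw [hJ, Matrix.one_mul]
    _ = J * (J * V * J * U) := by simp only [Matrix.mul_assoc]
    _ = J := by rw [mul_eq_one_comm.mp hU, Matrix.mul_one]

section CoordSubspace

variable (K : Type*) {ι : Type*} [Field K] [Fintype ι]

noncomputable def coordSubspace (s : Finset ι) : Submodule K (ι → K) :=
  span K (Pi.basisFun K ι '' s)

variable {K}

theorem mem_coordSubspace {s : Finset ι} {w : ι → K} :
    w ∈ coordSubspace K s ↔ ∀ i ∉ s, w i = 0 := by
  rw [coordSubspace, Module.Basis.mem_span_image, Finsupp.support_subset_iff]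
  simp

theorem finrank_coordSubspace (s : Finset ι) : finrank K (coordSubspace K s) = s.card := by
  have hli := (Pi.basisFun K ι).linearIndependent.comp ((↑) : s → ι) Subtype.val_injective
  rw [coordSubspace, ← Subtype.range_coe (s := (s : Set ι)), ← Set.range_comp]
  exact (finrank_span_eq_card hli).trans (by simp)

theorem coordSubspace_mono : Monotone (coordSubspace K : Finset ι → Submodule K (ι → K)) :=
  fun _ _ hst => span_mono (Set.image_mono (Finset.coe_subset.mpr hst))

end CoordSubspace

section Pairing

variable {p q : ℕ}

theorem pairing_eq_dotProduct (z w : Fin (p + q) → ℂ) :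
    pairing p q z w = star w ⬝ᵥ (Jmat p q *ᵥ z) := by
  simp only [pairing, Jmat, dotProduct, mulVec_diagonal, Pi.star_apply, RCLike.star_def]
  exact Finset.sum_congr rfl fun i _ => by split_ifs <;> ring

-- Mathlib's sesquilinear forms are conjugate-linear in the first argument, `pairing` in the second.
variable (p q) in
noncomputable def pairingForm : (Fin (p + q) → ℂ) →ₗ⋆[ℂ] (Fin (p + q) → ℂ) →ₗ[ℂ] ℂ :=
  LinearMap.mk₂'ₛₗ (starRingEnd ℂ) (RingHom.id ℂ) (fun w z => pairing p q z w)
    (by simp [pairing_eq_dotProduct, add_dotProduct])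
    (by simp [pairing_eq_dotProduct, smul_dotProduct])
    (by simp [pairing_eq_dotProduct, mulVec_add, dotProduct_add])
    (by simp [pairing_eq_dotProduct, mulVec_smul, dotProduct_smul])

@[simp]
theorem pairingForm_apply (w z : Fin (p + q) → ℂ) : pairingForm p q w z = pairing p q z w := rfl

theorem pairingForm_isSymm : (pairingForm p q).IsSymm := ⟨fun w z => by
  simp only [pairingForm_apply, pairing, map_sum]
  exact Finset.sum_congr rfl fun i _ => by split_ifs <;> simp [mul_comm]⟩

theorem pairingForm_isOrthonormal_iff {ι : Type*} [DecidableEq ι] {x : ι → Fin (p + q) → ℂ} :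
    (pairingForm p q).IsOrthonormal x ↔ ∀ j k, pairing p q (x j) (x k) = if j = k then 1 else 0 :=
  forall_comm.trans <| forall₂_congr fun j k => by simp only [pairingForm_apply, eq_comm (a := k)]

theorem Jmat_mul_self : Jmat p q * Jmat p q = 1 := by
  rw [Jmat, diagonal_mul_diagonal, ← diagonal_one]
  congr 1
  ext i
  split_ifs <;> norm_num

theorem pairing_mulVec_mulVec {U : Matrix (Fin (p + q)) (Fin (p + q)) ℂ}
    (hU : Uᴴ * Jmat p q * U = Jmat p q) (z w : Fin (p + q) → ℂ) :
    pairing p q (U *ᵥ z) (U *ᵥ w) = pairing p q z w := by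
  rw [pairing_eq_dotProduct, pairing_eq_dotProduct, star_mulVec, mulVec_mulVec,
    ← dotProduct_mulVec, mulVec_mulVec, ← Matrix.mul_assoc, hU]

theorem re_pairing_diagonal (d : Fin (p + q) → ℝ) (w : Fin (p + q) → ℂ) :
    (pairing p q (diagonal (fun i => (d i : ℂ)) *ᵥ w) w).re
      = ∑ i : Fin (p + q), (if (i : ℕ) < p then 1 else -1) * d i * Complex.normSq (w i) := by
  simp only [pairing, mulVec_diagonal, Complex.re_sum, mul_assoc, Complex.mul_conj]
  exact Finset.sum_congr rfl fun i _ => by split_ifs <;> simp [← Complex.ofReal_mul]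

theorem re_pairing_self (w : Fin (p + q) → ℂ) :
    (pairing p q w w).re
      = ∑ i : Fin (p + q), (if (i : ℕ) < p then 1 else -1) * Complex.normSq (w i) := by
  simpa using re_pairing_diagonal (p := p) (fun _ => 1) w

end Pairing

section DiagonalModel

variable {p q : ℕ}

theorem re_pairing_diagonal_le {d : Fin (p + q) → ℝ} {c : ℝ} {w : Fin (p + q) → ℂ}
    (h : ∀ i, w i ≠ 0 → if (i : ℕ) < p then d i ≤ c else c ≤ d i) :
    (pairing p q (diagonal (fun i => (d i : ℂ)) *ᵥ w) w).re ≤ c * (pairing p q w w).re := by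
  rw [re_pairing_diagonal, re_pairing_self, Finset.mul_sum]
  refine Finset.sum_le_sum fun i _ => ?_
  by_cases hw : w i = 0
  · simp [hw]
  · have := h i hw
    have := Complex.normSq_nonneg (w i)
    split_ifs at * <;> nlinarith

theorem le_re_pairing_diagonal {d : Fin (p + q) → ℝ} {c : ℝ} {w : Fin (p + q) → ℂ}
    (h : ∀ i, w i ≠ 0 → if (i : ℕ) < p then c ≤ d i else d i ≤ c) :
    c * (pairing p q w w).re ≤ (pairing p q (diagonal (fun i => (d i : ℂ)) *ᵥ w) w).re := by
  rw [re_pairing_diagonal, re_pairing_self, Finset.mul_sum]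
  refine Finset.sum_le_sum fun i _ => ?_
  by_cases hw : w i = 0
  · simp [hw]
  · have := h i hw
    have := Complex.normSq_nonneg (w i)
    split_ifs at * <;> nlinarith

-- `diagEntries` puts `lam r` at coordinate `p - 1 - r`, so these are the coordinates carrying
-- `lam 0, …, lam (r - 1)`.
variable (p q) in
def lowCoords (r : ℕ) : Finset (Fin (p + q)) :=
  Finset.univ.filter (fun i => (i : ℕ) < p) \ Finset.univ.filter (fun i => (i : ℕ) < p - r)

theorem mem_lowCoords {r : ℕ} {i : Fin (p + q)} :
    i ∈ lowCoords p q r ↔ (i : ℕ) < p ∧ p ≤ i + r := by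
  simp only [lowCoords, Finset.mem_sdiff, Finset.mem_filter, Finset.mem_univ, true_and]
  omega

theorem card_lowCoords {r : ℕ} (hr : r ≤ p) : (lowCoords p q r).card = r := by
  rw [lowCoords, Finset.card_sdiff_of_subset
    (fun i => by simp only [Finset.mem_filter, Finset.mem_univ, true_and]; omega),
    Fin.card_filter_val_lt, Fin.card_filter_val_lt]
  omega

theorem lowCoords_mono : Monotone (lowCoords p q) := fun _ _ hrs i => by
  simp only [mem_lowCoords]; omega

variable (lam : Fin p → ℝ) (mu : Fin q → ℝ)

noncomputable def modelEigenvalue (i : Fin (p + q)) : ℝ :=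
  if h : (i : ℕ) < p then lam ⟨p - 1 - i, by omega⟩ else mu ⟨i - p, by omega⟩

theorem diagEntries_eq_ofReal :
    diagEntries p q lam mu = fun i => (modelEigenvalue lam mu i : ℂ) := by
  funext i
  unfold diagEntries modelEigenvalue
  split <;> rfl

variable {lam mu}

theorem re_pairing_diagEntries_le (hlam : Monotone lam) (r : Fin p) {w : Fin (p + q) → ℂ}
    (hw : w ∈ coordSubspace ℂ (lowCoords p q (r + 1))) :
    (pairing p q (diagonal (diagEntries p q lam mu) *ᵥ w) w).re ≤ lam r * (pairing p q w w).re := by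
  rw [diagEntries_eq_ofReal]
  refine re_pairing_diagonal_le fun i hwi => ?_
  have hi := mem_lowCoords.mp (not_not.mp (mt (mem_coordSubspace.mp hw i) hwi))
  rw [if_pos hi.1, modelEigenvalue, dif_pos hi.1]
  exact hlam (Fin.le_def.mpr (by simp only; omega))

theorem le_re_pairing_diagEntries (hp : 0 < p) (hq : 0 < q) (hlam : Monotone lam)
    (hmu : Antitone mu) (hsep : mu ⟨0, hq⟩ < lam ⟨0, hp⟩) (r : Fin p) {w : Fin (p + q) → ℂ}
    (hw : w ∈ coordSubspace ℂ (lowCoords p q r)ᶜ) :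
    lam r * (pairing p q w w).re ≤ (pairing p q (diagonal (diagEntries p q lam mu) *ᵥ w) w).re := by
  rw [diagEntries_eq_ofReal]
  refine le_re_pairing_diagonal fun i hwi => ?_
  have hi := mem_lowCoords.not.mp (Finset.mem_compl.mp
    (not_not.mp (mt (mem_coordSubspace.mp hw i) hwi)))
  rw [modelEigenvalue]
  split_ifs with hip
  · exact hlam (Fin.le_def.mpr (by simp only; omega))
  · calc mu _ ≤ mu ⟨0, hq⟩ := hmu (Fin.le_def.mpr (Nat.zero_le _))
      _ ≤ lam ⟨0, hp⟩ := hsep.le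
      _ ≤ lam r := hlam (Fin.le_def.mpr (Nat.zero_le _))

theorem re_pairing_self_pos_of_mem {r : ℕ} {w : Fin (p + q) → ℂ}
    (hw : w ∈ coordSubspace ℂ (lowCoords p q r)) (hw0 : w ≠ 0) : 0 < (pairing p q w w).re := by
  obtain ⟨i, hi⟩ := Function.ne_iff.mp hw0
  have hsupp : ∀ j, w j ≠ 0 → (j : ℕ) < p := fun j hj =>
    (mem_lowCoords.mp (not_not.mp (mt (mem_coordSubspace.mp hw j) hj))).1
  rw [re_pairing_self]
  refine Finset.sum_pos' (fun j _ => ?_) ⟨i, Finset.mem_univ _, ?_⟩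
  · by_cases hj : w j = 0
    · simp [hj]
    · rw [if_pos (hsupp j hj), one_mul]
      exact Complex.normSq_nonneg _
  · rw [if_pos (hsupp i hi), one_mul]
    exact Complex.normSq_pos.mpr hi

end DiagonalModel

theorem StrictMono.val_sub_le_val_sub {m p : ℕ} {f : Fin m → Fin p} (hf : StrictMono f)
    {j k : Fin m} (hjk : j ≤ k) : (k : ℕ) - j ≤ f k - f j := by
  have h := Finset.card_le_card_of_injOn (s := Finset.Icc j k) (t := Finset.Icc (f j) (f k)) f
    (fun i hi => by
      rw [Finset.coe_Icc, Set.mem_Icc] at hi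
      exact Finset.mem_coe.mpr (Finset.mem_Icc.mpr ⟨hf.monotone hi.1, hf.monotone hi.2⟩))
    hf.injective.injOn
  rw [Fin.card_Icc, Fin.card_Icc] at h
  have := Fin.le_def.mp (hf.monotone hjk)
  omega

section Admissible

variable {p q : ℕ} {hp : 0 < p} {hq : 0 < q} {A : Matrix (Fin (p + q)) (Fin (p + q)) ℂ}
  {lam : Fin p → ℝ} {mu : Fin q → ℝ}

theorem IsAdmissible.exists_linearEquiv (hA : IsAdmissible p q hp hq A lam mu) :
    ∃ e : (Fin (p + q) → ℂ) ≃ₗ[ℂ] (Fin (p + q) → ℂ),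
      (∀ z w, pairing p q (e z) (e w) = pairing p q z w) ∧
      ∀ w, A *ᵥ e w = e (diagonal (diagEntries p q lam mu) *ᵥ w) := by
  obtain ⟨-, -, -, -, U, hU, hUJ, rfl⟩ := hA
  let := hU.invertible
  refine ⟨toLinearEquiv' U this,
    pairing_mulVec_mulVec (mul_mul_eq_of_mul_mul_eq Jmat_mul_self hUJ), fun w => ?_⟩
  change (U * diagonal _ * U⁻¹) *ᵥ (U *ᵥ w) = U *ᵥ (diagonal _ *ᵥ w)
  rw [mulVec_mulVec, mulVec_mulVec, Matrix.mul_assoc, inv_mul_of_invertible, Matrix.mul_one]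

theorem exists_isFlag_sum_le (hA : IsAdmissible p q hp hq A lam mu) {m : ℕ} (hm : 0 < m)
    {idx : Fin m → Fin p} (hidx : StrictMono idx) :
    ∃ V, IsFlag p q m hm idx V ∧ ∀ x, IsSubordinate p q m V x →
      ∑ j, (pairing p q (A *ᵥ x j) (x j)).re ≤ ∑ j, lam (idx j) := by
  obtain ⟨e, he, hAe⟩ := hA.exists_linearEquiv
  obtain ⟨-, hlam, -⟩ := hA
  set V : Fin m → Submodule ℂ (Fin (p + q) → ℂ) :=
    fun j => (coordSubspace ℂ (lowCoords p q (idx j + 1))).map e.toLinearMap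
  have hrank : ∀ j, finrank ℂ (V j) = idx j + 1 := fun j => by
    rw [LinearEquiv.finrank_map_eq, finrank_coordSubspace, card_lowCoords (idx j).isLt]
  refine ⟨V, ⟨fun j k hjk => lt_of_le_of_ne ?_ fun h => ?_, hrank, ?_⟩, ?_⟩
  · exact map_mono (coordSubspace_mono (lowCoords_mono
      (Nat.succ_le_succ (Fin.le_def.mp (hidx hjk).le))))
  · have := hrank j
    rw [h, hrank k] at this
    exact (hidx hjk).ne (Fin.ext (by omega))
  · rintro _ ⟨w, hw, rfl⟩ hw0
    rw [LinearEquiv.coe_coe, he]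
    exact re_pairing_self_pos_of_mem hw (fun h => hw0 (by simp [h]))
  · rintro x ⟨hxV, hxx⟩
    refine Finset.sum_le_sum fun j _ => ?_
    obtain ⟨w, hw, hwx⟩ := hxV j
    rw [LinearEquiv.coe_coe] at hwx
    have hww : pairing p q w w = 1 := by rw [← he, hwx, hxx, if_pos rfl]
    have := re_pairing_diagEntries_le (mu := mu) hlam (idx j) hw
    rwa [hww, Complex.one_re, mul_one, ← he, ← hAe, hwx] at this

theorem IsFlag.monotone {m : ℕ} {hm : 0 < m} {idx : Fin m → Fin p}
    {V : Fin m → Submodule ℂ (Fin (p + q) → ℂ)} (hV : IsFlag p q m hm idx V) : Monotone V :=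
  fun j k hjk => hjk.eq_or_lt.elim (fun h => h ▸ le_rfl) fun h => (hV.1 j k h).le

theorem IsFlag.exists_isSubordinate_le_sum (hA : IsAdmissible p q hp hq A lam mu) {m : ℕ}
    {hm : 0 < m} {idx : Fin m → Fin p} (hidx : StrictMono idx)
    {V : Fin m → Submodule ℂ (Fin (p + q) → ℂ)} (hV : IsFlag p q m hm idx V) :
    ∃ x, IsSubordinate p q m V x ∧
      ∑ j, lam (idx j) ≤ ∑ j, (pairing p q (A *ᵥ x j) (x j)).re := by
  obtain ⟨e, he, hAe⟩ := hA.exists_linearEquiv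
  obtain ⟨-, hlam, hmu, hsep, -⟩ := hA
  have hVmono := hV.monotone
  obtain ⟨-, hVrank, hVpos⟩ := hV
  set W : Fin m → Submodule ℂ (Fin (p + q) → ℂ) :=
    fun j => (coordSubspace ℂ (lowCoords p q (idx j))ᶜ).map e.toLinearMap
  have hWrank : ∀ j, finrank ℂ (W j) + idx j = p + q := fun j => by
    rw [LinearEquiv.finrank_map_eq, finrank_coordSubspace, Finset.card_compl, Fintype.card_fin,
      card_lowCoords (idx j).isLt.le]
    omega
  obtain ⟨x, hxV, hx, hsum⟩ := pairingForm_isSymm.exists_isOrthonormal_sum_le (toLin' A) V W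
    hVmono
    (fun j k hjk => map_mono (coordSubspace_mono (Finset.compl_subset_compl.mpr
      (lowCoords_mono (Fin.le_def.mp (hidx.monotone hjk))))))
    (fun j k hjk => by
      have := hidx.val_sub_le_val_sub hjk
      have := Fin.le_def.mp hjk
      have := Fin.le_def.mp (hidx.monotone hjk)
      have := hVrank k
      have := hWrank j
      rw [finrank_fin_fun]
      omega)
    (fun k v hv hv0 => hVpos v (hVmono (Fin.le_def.mpr (Nat.le_sub_one_of_lt k.isLt)) hv) hv0)
    (fun j => lam (idx j))
    (by
      rintro j _ ⟨w, hw, rfl⟩ hww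
      rw [LinearEquiv.coe_coe, pairingForm_apply, he] at hww
      have := le_re_pairing_diagEntries hp hq hlam hmu hsep (idx j) hw
      rwa [hww, Complex.one_re, mul_one, ← he, ← hAe] at this)
  exact ⟨x, ⟨hxV, pairingForm_isOrthonormal_iff.mp hx⟩, by simpa using hsum⟩

end Admissible

/-- Wielandt minimax analogue: `Σ_j λ_{i_j}` is the min over flags of
the max over subordinate systems of `Σ_j x_j† A x_j`; precisely, (i) for every flag
some subordinate system has `Σ_j x_j† A x_j ≥ Σ_j λ_{i_j}`, and (ii) some flag has
`Σ_j x_j† A x_j ≤ Σ_j λ_{i_j}` for every subordinate system. -/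
theorem wielandt_minimax
    (p q : ℕ) (hp : 0 < p) (hq : 0 < q)
    (A : Matrix (Fin (p + q)) (Fin (p + q)) ℂ)
    (lam : Fin p → ℝ) (mu : Fin q → ℝ)
    (hA : IsAdmissible p q hp hq A lam mu)
    (m : ℕ) (hm : 0 < m) (idx : Fin m → Fin p) (hidx : StrictMono idx) :
    (∀ V : Fin m → Submodule ℂ (Fin (p + q) → ℂ), IsFlag p q m hm idx V →
        ∃ x : Fin m → Fin (p + q) → ℂ, IsSubordinate p q m V x ∧
          ∑ j : Fin m, lam (idx j) ≤
            ∑ j : Fin m, (pairing p q (A.mulVec (x j)) (x j)).re) ∧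
    (∃ V : Fin m → Submodule ℂ (Fin (p + q) → ℂ), IsFlag p q m hm idx V ∧
        ∀ x : Fin m → Fin (p + q) → ℂ, IsSubordinate p q m V x →
          ∑ j : Fin m, (pairing p q (A.mulVec (x j)) (x j)).re ≤
            ∑ j : Fin m, lam (idx j)) := by
  exact ⟨fun _ hV => hV.exists_isSubordinate_le_sum hA hidx, exists_isFlag_sum_le hA hm hidx⟩
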